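/- Let x, y generate a copy of ℤ² in a group B, and for n ∈ ℕ define f_n, g_n : B → A supported respectively on {x^i : |i| ≤ n} and {x^i y^i : |i| ≤ n} with value a ≠ e_A on their supports. Then u_n = (f_n, y) and v_n = (g_n, y) are conjugate in A ≀ B via (h_n, e), where h_n(x^i y^j) = a for 0 < i ≤ n and 0 ≤ j < i, h_n(x^i y^j) = a^{-1} for −n ≤ i < 0 and i ≤ j < 0, and h_n = e_A elsewhere. Verify the conjugacy identity f_n · h_n^y = h_n · g_n (as functions B → A) together with y·e = e·y. -/
import Mathlib


/-- Multiplication in the restricted wreath product `A ≀ B`: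
`(f,b)(g,c) = (f · g^b, bc)` where `g^b (z) = g (b⁻¹ z)`. -/
def wmul {A B : Type*} [Group A] [Group B] (p q : (B → A) × B) : (B → A) × B :=
  (fun z => p.1 z * q.1 (p.2⁻¹ * z), p.2 * q.2)

/-- Let `x, y` generate a copy of `ℤ²` in `B` and let
`fₙ, gₙ : B → A` take the value `a ≠ e_A` on `{xⁱ : |i| ≤ n}` and
`{xⁱyⁱ : |i| ≤ n}` respectively, and `e_A` elsewhere. Then `uₙ = (fₙ, y)` and
`vₙ = (gₙ, y)` are conjugate in `A ≀ B` via `(hₙ, e)`, where `hₙ(xⁱyʲ) = a` for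
`0 < i ≤ n`, `0 ≤ j < i`; `hₙ(xⁱyʲ) = a⁻¹` for `−n ≤ i < 0`, `i ≤ j < 0`; and
`hₙ = e_A` elsewhere: that is, `fₙ · hₙ^y = hₙ · gₙ` together with `y·e = e·y`,
i.e. `(fₙ, y)(hₙ, e) = (hₙ, e)(gₙ, y)`. -/
theorem wreath_Z2_quadratic_conjugator {A B : Type*} [Group A] [Group B]
    (x y : B) (hcomm : x * y = y * x)
    (hinj : Function.Injective (fun p : ℤ × ℤ => x ^ p.1 * y ^ p.2))
    (a : A) (ha : a ≠ 1) (n : ℕ)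
    (f g h : B → A)
    (hf₁ : ∀ i : ℤ, |i| ≤ n → f (x ^ i) = a)
    (hf₂ : ∀ z : B, (¬ ∃ i : ℤ, |i| ≤ n ∧ z = x ^ i) → f z = 1)
    (hg₁ : ∀ i : ℤ, |i| ≤ n → g (x ^ i * y ^ i) = a)
    (hg₂ : ∀ z : B, (¬ ∃ i : ℤ, |i| ≤ n ∧ z = x ^ i * y ^ i) → g z = 1)
    (hh₁ : ∀ i j : ℤ, 0 < i → i ≤ n → 0 ≤ j → j < i → h (x ^ i * y ^ j) = a)
    (hh₂ : ∀ i j : ℤ, -(n : ℤ) ≤ i → i < 0 → i ≤ j → j < 0 →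
      h (x ^ i * y ^ j) = a⁻¹)
    (hh₃ : ∀ z : B, (¬ ∃ i j : ℤ,
        ((0 < i ∧ i ≤ n ∧ 0 ≤ j ∧ j < i) ∨
          (-(n : ℤ) ≤ i ∧ i < 0 ∧ i ≤ j ∧ j < 0)) ∧ z = x ^ i * y ^ j) →
      h z = 1) :
    wmul (f, y) (h, (1 : B)) = wmul (h, (1 : B)) (g, y) := by
  have hc : Commute x y := hcomm
  -- commutation computations
  have key : ∀ i j : ℤ, y⁻¹ * (x ^ i * y ^ j) = x ^ i * y ^ (j - 1) := by
    intro i j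
    have h1 : y⁻¹ * x ^ i = x ^ i * y⁻¹ := ((hc.zpow_left i).inv_right.symm).eq
    rw [← mul_assoc, h1, mul_assoc]
    congr 1
    rw [show j - 1 = -1 + j by ring, zpow_add]
    simp
  have key2 : ∀ i j : ℤ, y * (x ^ i * y ^ j) = x ^ i * y ^ (j + 1) := by
    intro i j
    have h1 : y * x ^ i = x ^ i * y := ((hc.zpow_left i).symm).eq
    rw [← mul_assoc, h1, mul_assoc]
    congr 1
    rw [show j + 1 = 1 + j by ring, zpow_add]
    simp
  -- injectivity consequence
  have inj2 : ∀ i j i' j' : ℤ, x ^ i * y ^ j = x ^ i' * y ^ j' → i = i' ∧ j = j' := by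
    intro i j i' j' he
    have := hinj (a₁ := (i, j)) (a₂ := (i', j')) he
    exact ⟨congrArg Prod.fst this, congrArg Prod.snd this⟩
  -- value lemmas
  have hF : ∀ i j : ℤ, f (x ^ i * y ^ j) =
      if j = 0 ∧ -(n : ℤ) ≤ i ∧ i ≤ n then a else 1 := by
    intro i j
    split_ifs with hcond
    · obtain ⟨hj, hi1, hi2⟩ := hcond
      subst hj
      rw [zpow_zero, mul_one]
      exact hf₁ i (by rw [abs_le]; omega)
    · apply hf₂
      rintro ⟨i', hi', heq⟩
      rw [show x ^ i' = x ^ i' * y ^ (0 : ℤ) by simp] at heq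
      obtain ⟨h1, h2⟩ := inj2 _ _ _ _ heq
      rw [abs_le] at hi'
      exact hcond ⟨h2, by omega⟩
  have hG : ∀ i j : ℤ, g (x ^ i * y ^ j) =
      if j = i ∧ -(n : ℤ) ≤ i ∧ i ≤ n then a else 1 := by
    intro i j
    split_ifs with hcond
    · obtain ⟨hj, hi1, hi2⟩ := hcond
      subst hj
      exact hg₁ j (by rw [abs_le]; omega)
    · apply hg₂
      rintro ⟨i', hi', heq⟩
      obtain ⟨h1, h2⟩ := inj2 _ _ _ _ heq
      rw [abs_le] at hi'
      exact hcond ⟨by omega, by omega⟩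
  have hH : ∀ i j : ℤ, h (x ^ i * y ^ j) =
      if 0 < i ∧ i ≤ n ∧ 0 ≤ j ∧ j < i then a
      else if -(n : ℤ) ≤ i ∧ i < 0 ∧ i ≤ j ∧ j < 0 then a⁻¹ else 1 := by
    intro i j
    split_ifs with h1 h2
    · exact hh₁ i j h1.1 h1.2.1 h1.2.2.1 h1.2.2.2
    · exact hh₂ i j h2.1 h2.2.1 h2.2.2.1 h2.2.2.2
    · apply hh₃
      rintro ⟨i', j', hcond, heq⟩
      obtain ⟨e1, e2⟩ := inj2 _ _ _ _ heq
      subst e1; subst e2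
      rcases hcond with hc1 | hc1
      · exact h1 hc1
      · exact h2 hc1
  -- the main identity
  unfold wmul
  simp only [Prod.mk.injEq]
  constructor
  · funext z
    rw [inv_one, one_mul]
    by_cases hz : ∃ i j : ℤ, z = x ^ i * y ^ j
    · obtain ⟨i, j, rfl⟩ := hz
      rw [key i j, hF, hG, hH, hH]
      split_ifs <;> first | omega | simp
    · have hfz : f z = 1 := by
        apply hf₂; rintro ⟨i, _, rfl⟩
        exact hz ⟨i, 0, by simp⟩
      have hgz : g z = 1 := by
        apply hg₂; rintro ⟨i, _, rfl⟩
        exact hz ⟨i, i, rfl⟩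
      have hhz : h z = 1 := by
        apply hh₃; rintro ⟨i, j, _, rfl⟩
        exact hz ⟨i, j, rfl⟩
      have hhz' : h (y⁻¹ * z) = 1 := by
        apply hh₃; rintro ⟨i, j, _, heq⟩
        apply hz
        refine ⟨i, j + 1, ?_⟩
        rw [← key2 i j, ← heq, ← mul_assoc]
        simp
      rw [hfz, hgz, hhz, hhz', one_mul]
      
  · rw [mul_one, one_mul]
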